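/- arXiv:2411.12256 — 2 statements merged into one kernel-verified Lean document; each statement's English description precedes it below -/
import Mathlib

section
/- Let G be a finite tree whose leaves form the set X and whose internal vertices form the set Z. Let X_w ⊆ X and let C_w ⊆ Z block every path in G between X_w and X∖X_w. Let X_w = X_l ⊎ X_r be a partition. For each connected component G_i of the graph obtained from G by deleting C_w, let C_i ⊆ Z be a set of vertices of G_i blocking every path in G_i between X_l ∩ G_i and X_r ∩ G_i. Set D := (⋃_i C_i) ∪ C_w, C_l := {z ∈ D : some path in G from a vertex of X_l to z meets D only at z}, and C_r := {z ∈ D : some path in G from a vertex of X_r to z meets D only at z}. Then: C_l blocks every path in G between X_l and X∖X_l; C_r blocks every path in G between X_r and X∖X_r; C_l blocks every path between X_l and C_r ∪ C_w; and C_r blocks every path between X_r and C_l ∪ C_w. -/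
/-- `C` blocks all paths between `A` and `B` in the graph `G`: every walk with one
endpoint in `A` and the other in `B` contains a vertex of `C`. -/
def SimpleGraph.BlocksSets {α : Type} (G : SimpleGraph α) (C A B : Set α) : Prop :=
  ∀ ⦃a b : α⦄, a ∈ A → b ∈ B → ∀ p : G.Walk a b, ∃ c ∈ C, c ∈ p.support

/-- There is a walk from `u` to `v` avoiding the deleted vertex set `Cw`; i.e. `u` and `v`
lie in a common connected component of `G` minus `Cw`. -/
def SimpleGraph.AvoidWalk {α : Type} (G : SimpleGraph α) (Cw : Set α) (u v : α) : Prop :=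
  ∃ p : G.Walk u v, ∀ c ∈ Cw, c ∉ p.support

/-- The vertices of `D` that are reachable from `S` by a walk meeting `D` only at its
endpoint. -/
def SimpleGraph.firstHits {α : Type} (G : SimpleGraph α) (D S : Set α) : Set α :=
  {z | z ∈ D ∧ ∃ x ∈ S, ∃ p : G.Walk x z, ∀ y ∈ p.support, y ∈ D → y = z}

open Classical in
lemma firstHit_aux {α : Type} (G : SimpleGraph α) (D : Set α) :
    ∀ {u b : α} (p : G.Walk u b) {x : α} (q : G.Walk x u),
      (∀ y ∈ q.support, y ∈ D → y = u) → (∃ d ∈ D, d ∈ p.support) →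
      ∃ z ∈ D, z ∈ p.support ∧ ∃ r : G.Walk x z, ∀ y ∈ r.support, y ∈ D → y = z := by
  intro u b p
  induction p with
  | nil =>
    intro x q hq hd
    obtain ⟨d, hdD, hds⟩ := hd
    simp only [SimpleGraph.Walk.support_nil, List.mem_singleton] at hds
    subst hds
    exact ⟨d, hdD, by simp, q, hq⟩
  | @cons u v b h p ih =>
    intro x q hq hd
    by_cases huD : u ∈ D
    · exact ⟨u, huD, by simp, q, hq⟩
    · obtain ⟨d, hdD, hds⟩ := hd
      rw [SimpleGraph.Walk.support_cons, List.mem_cons] at hds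
      rcases hds with rfl | hds
      · exact absurd hdD huD
      · have hq' : ∀ y ∈ (q.concat h).support, y ∈ D → y = v := by
          intro y hy hyD
          rw [SimpleGraph.Walk.support_concat, List.mem_append] at hy
          rcases hy with hy | hy
          · exact absurd ((hq y hy hyD) ▸ hyD) huD
          · simpa using hy
        obtain ⟨z, hzD, hzs, r, hr⟩ := ih (q.concat h) hq' ⟨d, hdD, hds⟩
        exact ⟨z, hzD, by simp [hzs], r, hr⟩

lemma hit_firstHits {α : Type} (G : SimpleGraph α) (D S : Set α) {x b : α}
    (hx : x ∈ S) (p : G.Walk x b) (hd : ∃ d ∈ D, d ∈ p.support) :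
    ∃ c ∈ G.firstHits D S, c ∈ p.support := by
  obtain ⟨z, hzD, hzs, r, hr⟩ := firstHit_aux G D p SimpleGraph.Walk.nil (by
    intro y hy _
    simpa using hy) hd
  exact ⟨z, ⟨hzD, x, hx, r, hr⟩, hzs⟩

/-- Let `G` be a finite tree whose leaves form the set `X` and whose
internal vertices form the set `Z`.  Let `Xw ⊆ X` and let `Cw ⊆ Z` block every path in `G`
between `Xw` and `X∖Xw`.  Let `Xw = Xl ⊎ Xr` be a partition.  For each connected component
`Gᵢ` of the graph obtained from `G` by deleting `Cw` (components are encoded by the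
component-wise constant assignment `Ci` of a blocking set to each vertex), let `Ci ⊆ Z` be
a set of vertices of `Gᵢ` blocking every path in `Gᵢ` between `Xl ∩ Gᵢ` and `Xr ∩ Gᵢ`.
Set `D := (⋃ᵢ Cᵢ) ∪ Cw`, `Cl := {z ∈ D : some path in G from a vertex of Xl to z meets D
only at z}` and symmetrically `Cr`.  Then `Cl` blocks every path between `Xl` and `X∖Xl`,
`Cr` blocks every path between `Xr` and `X∖Xr`, `Cl` blocks every path between `Xl` and
`Cr ∪ Cw`, and `Cr` blocks every path between `Xr` and `Cl ∪ Cw`. -/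
theorem statement4 {α : Type} [Fintype α] [DecidableEq α]
    (G : SimpleGraph α) [DecidableRel G.Adj] (hG : G.IsTree)
    (X Z : Set α) (hX : X = {v : α | G.degree v ≤ 1}) (hZ : Z = Xᶜ)
    (Xw Xl Xr : Set α) (hXwX : Xw ⊆ X) (hpart : Xl ∪ Xr = Xw) (hlr : Disjoint Xl Xr)
    (Cw : Set α) (hCwZ : Cw ⊆ Z) (hCw : G.BlocksSets Cw Xw (X \ Xw))
    (Ci : α → Set α)
    (hCiZ : ∀ a : α, Ci a ⊆ Z)
    (hCiComp : ∀ a : α, ∀ z ∈ Ci a, z ∉ Cw ∧ G.AvoidWalk Cw a z)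
    (hCiConst : ∀ a b : α, G.AvoidWalk Cw a b → Ci a = Ci b)
    (hCiBlocks : ∀ a ∈ Xl, ∀ b ∈ Xr, ∀ p : G.Walk a b,
      (∀ c ∈ Cw, c ∉ p.support) → ∃ z ∈ Ci a, z ∈ p.support) :
    G.BlocksSets (G.firstHits (Cw ∪ ⋃ a, Ci a) Xl) Xl (X \ Xl) ∧
    G.BlocksSets (G.firstHits (Cw ∪ ⋃ a, Ci a) Xr) Xr (X \ Xr) ∧
    G.BlocksSets (G.firstHits (Cw ∪ ⋃ a, Ci a) Xl) Xl
      (G.firstHits (Cw ∪ ⋃ a, Ci a) Xr ∪ Cw) ∧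
    G.BlocksSets (G.firstHits (Cw ∪ ⋃ a, Ci a) Xr) Xr
      (G.firstHits (Cw ∪ ⋃ a, Ci a) Xl ∪ Cw) := by
  set D : Set α := Cw ∪ ⋃ a, Ci a with hD
  have hCwD : Cw ⊆ D := Set.subset_union_left
  have hCiD : ∀ a : α, Ci a ⊆ D := fun a =>
    (Set.subset_iUnion Ci a).trans Set.subset_union_right
  have hXlw : Xl ⊆ Xw := hpart ▸ Set.subset_union_left
  have hXrw : Xr ⊆ Xw := hpart ▸ Set.subset_union_right
  -- walks from Xl to X \ Xl meet D
  have meetsL : ∀ ⦃a b : α⦄, a ∈ Xl → b ∈ X \ Xl → ∀ p : G.Walk a b,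
      ∃ d ∈ D, d ∈ p.support := by
    intro a b ha hb p
    by_cases hbw : b ∈ Xw
    · by_cases hcw : ∃ c ∈ Cw, c ∈ p.support
      · obtain ⟨c, hc, hcs⟩ := hcw
        exact ⟨c, hCwD hc, hcs⟩
      · push_neg at hcw
        have hbr : b ∈ Xr := by
          rcases (hpart ▸ hbw : b ∈ Xl ∪ Xr) with h | h
          · exact absurd h hb.2
          · exact h
        obtain ⟨z, hz, hzs⟩ := hCiBlocks a ha b hbr p hcw
        exact ⟨z, hCiD a hz, hzs⟩
    · obtain ⟨c, hc, hcs⟩ := hCw (hXlw ha) ⟨hb.1, hbw⟩ p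
      exact ⟨c, hCwD hc, hcs⟩
  have meetsR : ∀ ⦃a b : α⦄, a ∈ Xr → b ∈ X \ Xr → ∀ p : G.Walk a b,
      ∃ d ∈ D, d ∈ p.support := by
    intro a b ha hb p
    by_cases hbw : b ∈ Xw
    · by_cases hcw : ∃ c ∈ Cw, c ∈ p.support
      · obtain ⟨c, hc, hcs⟩ := hcw
        exact ⟨c, hCwD hc, hcs⟩
      · push_neg at hcw
        have hbl : b ∈ Xl := by
          rcases (hpart ▸ hbw : b ∈ Xl ∪ Xr) with h | h
          · exact h
          · exact absurd h hb.2
        obtain ⟨z, hz, hzs⟩ := hCiBlocks b hbl a ha p.reverse (by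
          intro c hc
          rw [SimpleGraph.Walk.support_reverse, List.mem_reverse]
          exact hcw c hc)
        rw [SimpleGraph.Walk.support_reverse, List.mem_reverse] at hzs
        exact ⟨z, hCiD b hz, hzs⟩
    · obtain ⟨c, hc, hcs⟩ := hCw (hXrw ha) ⟨hb.1, hbw⟩ p
      exact ⟨c, hCwD hc, hcs⟩
  refine ⟨?_, ?_, ?_, ?_⟩
  · intro a b ha hb p
    exact hit_firstHits G D Xl ha p (meetsL ha hb p)
  · intro a b ha hb p
    exact hit_firstHits G D Xr ha p (meetsR ha hb p)
  · intro a b ha hb p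
    refine hit_firstHits G D Xl ha p ⟨b, ?_, p.end_mem_support⟩
    rcases hb with hb | hb
    · exact hb.1
    · exact hCwD hb
  · intro a b ha hb p
    refine hit_firstHits G D Xr ha p ⟨b, ?_, p.end_mem_support⟩
    rcases hb with hb | hb
    · exact hb.1
    · exact hCwD hb
end

section
/- Let T be a finite tree with a distinguished root r, and let A and B be nonempty disjoint sets of vertices of T with r ∉ A ∪ B. If a set C of vertices of T blocks every path between A and B, then C blocks every path between A and r, or C blocks every path between B and r. Consequently, the minimum cardinality of a set blocking all paths between A and B equals the minimum of: (a) the minimum cardinality of a set blocking all A–B paths and all A–r paths, and (b) the minimum cardinality of a set blocking all A–B paths and all B–r paths. -/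
/-- Let `T` be a finite tree with a distinguished root `r`, and let `A`
and `B` be nonempty disjoint sets of vertices of `T` with `r ∉ A ∪ B`.  If a set `C` of
vertices of `T` blocks every path between `A` and `B`, then `C` blocks every path between
`A` and `r`, or `C` blocks every path between `B` and `r`.  Consequently, the minimum
cardinality of a set blocking all paths between `A` and `B` equals the minimum of: (a) the
minimum cardinality of a set blocking all `A–B` paths and all `A–r` paths, and (b) the
minimum cardinality of a set blocking all `A–B` paths and all `B–r` paths. -/
theorem statement18 {α : Type} [Fintype α] (G : SimpleGraph α) (hG : G.IsTree)
    (r : α) (A B : Set α) (hA : A.Nonempty) (hB : B.Nonempty) (hAB : Disjoint A B)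
    (hr : r ∉ A ∪ B) :
    (∀ C : Set α, G.BlocksSets C A B →
      G.BlocksSets C A {r} ∨ G.BlocksSets C B {r}) ∧
    sInf {k : ℕ | ∃ C : Set α, C.ncard = k ∧ G.BlocksSets C A B} =
      min
        (sInf {k : ℕ | ∃ C : Set α, C.ncard = k ∧ G.BlocksSets C A B ∧
          G.BlocksSets C A {r}})
        (sInf {k : ℕ | ∃ C : Set α, C.ncard = k ∧ G.BlocksSets C A B ∧
          G.BlocksSets C B {r}}) := by
  classical
  have key : ∀ C : Set α, G.BlocksSets C A B →
      G.BlocksSets C A {r} ∨ G.BlocksSets C B {r} := by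
    intro C hC
    by_contra h
    push_neg at h
    obtain ⟨h1, h2⟩ := h
    simp only [SimpleGraph.BlocksSets, not_forall, not_exists] at h1 h2
    obtain ⟨a, r1, ha, hr1, p, hp⟩ := h1
    obtain ⟨b, r2, hb, hr2, q, hq⟩ := h2
    rw [Set.mem_singleton_iff] at hr1 hr2
    subst hr1; subst hr2
    obtain ⟨c, hcC, hcs⟩ := hC ha hb (p.append q.reverse)
    rcases (SimpleGraph.Walk.mem_support_append_iff _ _).1 hcs with hc | hc
    · exact hp c ⟨hcC, hc⟩
    · exact hq c ⟨hcC, by rwa [SimpleGraph.Walk.support_reverse, List.mem_reverse] at hc⟩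
  refine ⟨key, ?_⟩
  set S := {k : ℕ | ∃ C : Set α, C.ncard = k ∧ G.BlocksSets C A B} with hS
  set S1 := {k : ℕ | ∃ C : Set α, C.ncard = k ∧ G.BlocksSets C A B ∧
      G.BlocksSets C A {r}} with hS1
  set S2 := {k : ℕ | ∃ C : Set α, C.ncard = k ∧ G.BlocksSets C A B ∧
      G.BlocksSets C B {r}} with hS2
  have huniv : ∀ X Y : Set α, G.BlocksSets Set.univ X Y :=
    fun X Y a b _ _ p => ⟨a, Set.mem_univ a, p.start_mem_support⟩
  have hS1ne : S1.Nonempty := ⟨(Set.univ : Set α).ncard,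
    Set.univ, rfl, huniv A B, huniv A {r}⟩
  have hS2ne : S2.Nonempty := ⟨(Set.univ : Set α).ncard,
    Set.univ, rfl, huniv A B, huniv B {r}⟩
  have hSne : S.Nonempty := ⟨(Set.univ : Set α).ncard, Set.univ, rfl, huniv A B⟩
  apply le_antisymm
  · apply le_min
    · obtain ⟨C, hCc, hCb, _⟩ := Nat.sInf_mem hS1ne
      exact Nat.sInf_le ⟨C, hCc, hCb⟩
    · obtain ⟨C, hCc, hCb, _⟩ := Nat.sInf_mem hS2ne
      exact Nat.sInf_le ⟨C, hCc, hCb⟩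
  · obtain ⟨C, hCc, hCb⟩ := Nat.sInf_mem hSne
    rcases key C hCb with h | h
    · exact le_trans (min_le_left _ _) (hCc ▸ Nat.sInf_le ⟨C, rfl, hCb, h⟩)
    · exact le_trans (min_le_right _ _) (hCc ▸ Nat.sInf_le ⟨C, rfl, hCb, h⟩)
end
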